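/- arXiv:2412.04328 — 6 statements merged into one kernel-verified Lean document; each statement's English description precedes it below -/
import Mathlib

section
/- Let g(z) = z(exp(z) − 1)/(exp(z) − z − 1) for z > 0. Then for every z > 0 the derivative of g at z equals exp(z)·(2·cosh(z) − 2 − z²)/(exp(z) − z − 1)², this quantity is strictly positive, and consequently g is strictly increasing on (0, ∞). -/
open Real

/-! Clearing the denominator `(exp z - z - 1) ^ 2`, the numerator of `g'` is
`exp z * (2 cosh z - 2 - z ^ 2)`. Since `2 cosh z - 2 = (2 sinh (z / 2)) ^ 2`, this factor is
`(2 sinh (z / 2) - z) (2 sinh (z / 2) + z)`, which is positive for `z > 0` because `sinh t > t`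
for `t > 0`. -/

noncomputable def karpSipserG (z : ℝ) : ℝ := z * (exp z - 1) / (exp z - z - 1)

lemma exp_sub_self_sub_one_pos {z : ℝ} (hz : z ≠ 0) : 0 < exp z - z - 1 := by
  linarith [add_one_lt_exp hz]

lemma two_mul_cosh_sub_two_sub_sq_pos {z : ℝ} (hz : z ≠ 0) : 0 < 2 * cosh z - 2 - z ^ 2 := by
  wlog hpos : 0 < z generalizing z
  · simpa using this (neg_ne_zero.2 hz) (neg_pos.2 (lt_of_le_of_ne (not_lt.1 hpos) hz))
  have hsinh : z / 2 < sinh (z / 2) := self_lt_sinh_iff.2 (half_pos hpos)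
  have hcosh : cosh z = 1 + 2 * sinh (z / 2) ^ 2 := by
    have := cosh_two_mul (z / 2)
    rw [mul_div_cancel₀ z two_ne_zero, cosh_sq] at this
    linarith
  rw [hcosh]
  nlinarith

lemma hasDerivAt_karpSipserG {z : ℝ} (hz : z ≠ 0) :
    HasDerivAt karpSipserG
      (exp z * (2 * cosh z - 2 - z ^ 2) / (exp z - z - 1) ^ 2) z := by
  have hnum : HasDerivAt (fun z ↦ z * (exp z - 1)) (1 * (exp z - 1) + z * exp z) z :=
    (hasDerivAt_id z).mul ((hasDerivAt_exp z).sub_const 1)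
  have hden : HasDerivAt (fun z ↦ exp z - z - 1) (exp z - 1) z :=
    ((hasDerivAt_exp z).sub (hasDerivAt_id' z)).sub_const 1
  refine (hnum.div hden (exp_sub_self_sub_one_pos hz).ne').congr_deriv ?_
  rw [cosh_eq, exp_neg]
  field_simp
  ring

/-- For `g z = z (exp z - 1) / (exp z - z - 1)` on `(0, ∞)`:
the derivative of `g` at each `z > 0` equals
`exp z * (2 cosh z - 2 - z ^ 2) / (exp z - z - 1) ^ 2`, this quantity is strictly
positive, and `g` is strictly increasing on `(0, ∞)`. -/
theorem karpSipser_deriv_g_pos :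
    (∀ z : ℝ, 0 < z →
      deriv (fun z : ℝ => z * (Real.exp z - 1) / (Real.exp z - z - 1)) z
        = Real.exp z * (2 * Real.cosh z - 2 - z ^ 2) / (Real.exp z - z - 1) ^ 2 ∧
      0 < Real.exp z * (2 * Real.cosh z - 2 - z ^ 2) / (Real.exp z - z - 1) ^ 2) ∧
    StrictMonoOn (fun z : ℝ => z * (Real.exp z - 1) / (Real.exp z - z - 1)) (Set.Ioi 0) := by
  have hderiv_pos (z : ℝ) (hz : 0 < z) :
      0 < exp z * (2 * cosh z - 2 - z ^ 2) / (exp z - z - 1) ^ 2 :=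
    div_pos (mul_pos (exp_pos z) (two_mul_cosh_sub_two_sub_sq_pos hz.ne'))
      (pow_pos (exp_sub_self_sub_one_pos hz.ne') 2)
  have hderiv (z : ℝ) (hz : 0 < z) :
      deriv karpSipserG z = exp z * (2 * cosh z - 2 - z ^ 2) / (exp z - z - 1) ^ 2 :=
    (hasDerivAt_karpSipserG hz.ne').deriv
  refine ⟨fun z hz ↦ ⟨hderiv z hz, hderiv_pos z hz⟩, strictMonoOn_of_deriv_pos (convex_Ioi 0) ?_ ?_⟩
  · exact fun z hz ↦ (hasDerivAt_karpSipserG (ne_of_gt hz)).continuousAt.continuousWithinAt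
  · rw [interior_Ioi]
    exact fun z hz ↦ (hderiv_pos z hz).trans_eq (hderiv z hz).symm
end

section
/- Let z̃ : [0, ∞) → [0, ∞) be the function with z̃(0) = 0 and, for r > 0, z̃(r) equal to the unique z > 0 satisfying z(exp(z) − 1)/(exp(z) − z − 1) = 2 + r. Then z̃ is infinitely differentiable on [0, ∞) (i.e. z̃ is C^∞ on the closed half-line, including one-sidedly at 0; equivalently, it agrees on [0, ∞) with a C^∞ function defined on a neighbourhood of [0, ∞)). -/
open Real Filter Set Topology

namespace KarpSipserAux

/-- coefficients `1/(n+m)!` -/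
noncomputable def cseq (m : ℕ) : ℕ → ℝ := fun n => ((n + m).factorial : ℝ)⁻¹

/-- the power series `∑ x^n/(n+m)!` -/
noncomputable def pser (m : ℕ) : FormalMultilinearSeries ℝ ℝ ℝ :=
  FormalMultilinearSeries.ofScalars ℝ (cseq m)

lemma pser_radius (m : ℕ) : (pser m).radius = ⊤ := by
  apply FormalMultilinearSeries.ofScalars_radius_eq_top_of_tendsto
  · exact Eventually.of_forall fun n => by
      simp only [cseq]
      positivity
  · have heq : (fun n : ℕ => ‖cseq m (n + 1)‖ / ‖cseq m n‖)
        = fun n : ℕ => (((n + m : ℕ) : ℝ) + 1)⁻¹ := by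
      funext n
      have h1 : (0:ℝ) < ((n + m).factorial : ℝ) := by positivity
      have h2 : (0:ℝ) < ((n + 1 + m).factorial : ℝ) := by positivity
      have hfac : ((n + 1 + m).factorial : ℝ) = (((n + m : ℕ) : ℝ) + 1) * ((n + m).factorial : ℝ) := by
        have h3 : n + 1 + m = (n + m) + 1 := by omega
        rw [h3, Nat.factorial_succ]
        push_cast
        ring
      have hb : (0:ℝ) < ((n + m : ℕ) : ℝ) + 1 := by positivity
      simp only [cseq]
      rw [Real.norm_of_nonneg (by positivity), Real.norm_of_nonneg (by positivity), hfac]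
      field_simp
    rw [show (fun n : ℕ => ‖cseq m n.succ‖ / ‖cseq m n‖)
        = fun n : ℕ => (((n + m : ℕ) : ℝ) + 1)⁻¹ from heq]
    apply Filter.Tendsto.comp tendsto_inv_atTop_zero
    apply tendsto_atTop_add_const_right
    exact tendsto_natCast_atTop_atTop.comp (tendsto_add_atTop_nat m)

lemma pser_hasFPow (m : ℕ) : HasFPowerSeriesOnBall (pser m).sum (pser m) 0 ⊤ := by
  have h := (pser m).hasFPowerSeriesOnBall (by rw [pser_radius]; exact ENNReal.zero_lt_top)
  rwa [pser_radius m] at h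

lemma pser_analyticAt (m : ℕ) (x : ℝ) : AnalyticAt ℝ (pser m).sum x :=
  (pser_hasFPow m).analyticAt_of_mem (by simp [EMetric.mem_ball, edist_lt_top])

lemma pser_sum_eq (m : ℕ) (x : ℝ) :
    (pser m).sum x = ∑' n : ℕ, (((n + m).factorial : ℝ))⁻¹ * x ^ n := by
  have : (pser m).sum x = FormalMultilinearSeries.ofScalarsSum (cseq m) x := rfl
  rw [this, FormalMultilinearSeries.ofScalars_sum_eq]
  simp [cseq, smul_eq_mul]

/-- `k(x) = ∑ x^n/(n+1)!` -/
noncomputable def kf : ℝ → ℝ := (pser 1).sum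
/-- `h(x) = ∑ x^n/(n+2)!` -/
noncomputable def hf : ℝ → ℝ := (pser 2).sum

lemma exp_split (x : ℝ) :
    Real.exp x = 1 + (x + ∑' n : ℕ, x ^ (n + 2) / ((n + 2).factorial : ℝ)) := by
  have hs : Summable (fun n : ℕ => x ^ n / (n.factorial : ℝ)) :=
    Real.summable_pow_div_factorial x
  have hexp : Real.exp x = ∑' n : ℕ, x ^ n / (n.factorial : ℝ) := by
    rw [Real.exp_eq_exp_ℝ, NormedSpace.exp_eq_tsum_div]
  rw [hexp, Summable.tsum_eq_zero_add hs]
  have hs1 : Summable (fun n : ℕ => x ^ (n + 1) / ((n + 1).factorial : ℝ)) :=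
    (summable_nat_add_iff 1).2 hs
  rw [Summable.tsum_eq_zero_add hs1]
  norm_num

lemma kf_id (x : ℝ) : x * kf x = Real.exp x - 1 := by
  have hs : Summable (fun n : ℕ => x ^ n / (n.factorial : ℝ)) :=
    Real.summable_pow_div_factorial x
  have hexp : Real.exp x = ∑' n : ℕ, x ^ n / (n.factorial : ℝ) := by
    rw [Real.exp_eq_exp_ℝ, NormedSpace.exp_eq_tsum_div]
  have h1 : x * kf x = ∑' n : ℕ, x ^ (n + 1) / ((n + 1).factorial : ℝ) := by
    rw [kf, pser_sum_eq, ← tsum_mul_left]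
    congr 1
    funext n
    rw [div_eq_mul_inv, pow_succ]
    ring
  rw [h1, hexp, Summable.tsum_eq_zero_add hs]
  norm_num

lemma hf_id (x : ℝ) : x ^ 2 * hf x = Real.exp x - x - 1 := by
  have h1 : x ^ 2 * hf x = ∑' n : ℕ, x ^ (n + 2) / ((n + 2).factorial : ℝ) := by
    rw [hf, pser_sum_eq, ← tsum_mul_left]
    congr 1
    funext n
    rw [div_eq_mul_inv, pow_add]
    ring
  rw [h1, exp_split x]
  ring

lemma kf_zero : kf 0 = 1 := by
  have : kf 0 = FormalMultilinearSeries.ofScalarsSum (cseq 1) 0 := rfl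
  rw [this, FormalMultilinearSeries.ofScalarsSum_zero]
  simp [cseq]

lemma hf_zero : hf 0 = 2⁻¹ := by
  have : hf 0 = FormalMultilinearSeries.ofScalarsSum (cseq 2) 0 := rfl
  rw [this, FormalMultilinearSeries.ofScalarsSum_zero]
  simp [cseq]

lemma kf_deriv : HasDerivAt kf (2⁻¹ : ℝ) 0 := by
  have h := (pser_hasFPow 1).hasFPowerSeriesAt.hasDerivAt
  have hc : (pser 1) 1 (fun _ => (1:ℝ)) = (2⁻¹ : ℝ) := by
    rw [pser, FormalMultilinearSeries.ofScalars_apply_eq]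
    simp [cseq]
  rwa [hc] at h

lemma hf_deriv : HasDerivAt hf (6⁻¹ : ℝ) 0 := by
  have h := (pser_hasFPow 2).hasFPowerSeriesAt.hasDerivAt
  have hc : (pser 2) 1 (fun _ => (1:ℝ)) = (6⁻¹ : ℝ) := by
    rw [pser, FormalMultilinearSeries.ofScalars_apply_eq]
    simp [cseq]
    norm_num [Nat.factorial]
  rwa [hc] at h

lemma hf_pos (x : ℝ) : 0 < hf x := by
  rcases eq_or_ne x 0 with h | h
  · rw [h, hf_zero]; norm_num
  · have hlt : x + 1 < Real.exp x := Real.add_one_lt_exp h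
    have hx2 : (0:ℝ) < x ^ 2 := by positivity
    have := hf_id x
    nlinarith

/-- the function `g(z) = z (e^z - 1) / (e^z - z - 1)` with removable singularity filled in -/
noncomputable def gfun : ℝ → ℝ := fun x => kf x / hf x

lemma gfun_analyticAt (x : ℝ) : AnalyticAt ℝ gfun x :=
  (pser_analyticAt 1 x).div (pser_analyticAt 2 x) (hf_pos x).ne'

lemma gfun_zero : gfun 0 = 2 := by
  rw [gfun, kf_zero, hf_zero]; norm_num

lemma gfun_eq (z : ℝ) (hz : z ≠ 0) :
    z * (Real.exp z - 1) / (Real.exp z - z - 1) = gfun z := by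
  have h1 : z * (Real.exp z - 1) = z ^ 2 * kf z := by rw [← kf_id]; ring
  have h2 : Real.exp z - z - 1 = z ^ 2 * hf z := (hf_id z).symm
  rw [h1, h2, gfun]
  exact mul_div_mul_left _ _ (pow_ne_zero 2 hz)

lemma gfun_deriv_zero : HasDerivAt gfun ((3:ℝ)⁻¹) 0 := by
  have h := kf_deriv.div hf_deriv (by rw [hf_zero]; norm_num)
  have : (2⁻¹ * hf 0 - kf 0 * 6⁻¹) / hf 0 ^ 2 = (3:ℝ)⁻¹ := by
    rw [hf_zero, kf_zero]; norm_num
  rwa [this] at h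

lemma gfun_deriv_pos (z : ℝ) (hz : 0 < z) : ∃ d, 0 < d ∧ HasDerivAt gfun d z := by
  have hD : 0 < Real.exp z - z - 1 := by
    have := Real.add_one_lt_exp hz.ne'
    linarith
  have hN : HasDerivAt (fun x : ℝ => x * (Real.exp x - 1))
      (1 * (Real.exp z - 1) + z * Real.exp z) z :=
    (hasDerivAt_id z).mul ((Real.hasDerivAt_exp z).sub_const 1)
  have hDd : HasDerivAt (fun x : ℝ => Real.exp x - x - 1) (Real.exp z - 1) z := by
    simpa using ((Real.hasDerivAt_exp z).sub (hasDerivAt_id z)).sub_const 1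
  have hq := hN.div hDd hD.ne'
  have heq : gfun =ᶠ[nhds z] fun x => x * (Real.exp x - 1) / (Real.exp x - x - 1) := by
    filter_upwards [eventually_ne_nhds hz.ne'] with x hx
    exact (gfun_eq x hx).symm
  have hgd : HasDerivAt gfun
      (((1 * (Real.exp z - 1) + z * Real.exp z) * (Real.exp z - z - 1)
        - z * (Real.exp z - 1) * (Real.exp z - 1)) / (Real.exp z - z - 1) ^ 2) z :=
    hq.congr_of_eventuallyEq heq
  refine ⟨_, ?_, hgd⟩
  apply div_pos _ (by positivity)
  have hkey : (1 * (Real.exp z - 1) + z * Real.exp z) * (Real.exp z - z - 1)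
      - z * (Real.exp z - 1) * (Real.exp z - 1)
      = (Real.exp z - 1) ^ 2 - z ^ 2 * Real.exp z := by ring
  rw [hkey]
  set a := Real.exp (z / 2) with ha_def
  have ha : 0 < a := Real.exp_pos _
  have haa : a * a = Real.exp z := by rw [← Real.exp_add]; norm_num
  have hsinh : z / 2 < Real.sinh (z / 2) := Real.self_lt_sinh_iff.mpr (by linarith)
  have hsinh_eq : Real.sinh (z / 2) = (a - a⁻¹) / 2 := by
    rw [Real.sinh_eq, Real.exp_neg]
  have h2 : z < a - a⁻¹ := by rw [hsinh_eq] at hsinh; linarith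
  have h3 : z * a < (a - a⁻¹) * a := mul_lt_mul_of_pos_right h2 ha
  have h4 : (a - a⁻¹) * a = a * a - 1 := by field_simp
  have h5 : z * a < a * a - 1 := by rw [← h4]; exact h3
  have h6 : 0 < z * a := mul_pos hz ha
  rw [← haa]
  nlinarith [h5, h6]

end KarpSipserAux

open KarpSipserAux in
/-- Let `z̃ : [0,∞) → [0,∞)` be the function with `z̃ 0 = 0` and, for
`r > 0`, `z̃ r` the unique `z > 0` with `z (exp z - 1)/(exp z - z - 1) = 2 + r`.
Then `z̃` is `C^∞` on the closed half-line `[0, ∞)` (one-sidedly at `0`). -/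
theorem karpSipser_ztilde_smooth (ztilde : ℝ → ℝ) (h0 : ztilde 0 = 0)
    (hz : ∀ r : ℝ, 0 < r → 0 < ztilde r ∧
      ztilde r * (Real.exp (ztilde r) - 1) / (Real.exp (ztilde r) - ztilde r - 1) = 2 + r) :
    ContDiffOn ℝ (⊤ : ℕ∞) ztilde (Set.Ici 0) := by
  -- global facts about `gfun`
  have hgcd : ContDiff ℝ (⊤ : WithTop ℕ∞) gfun :=
    contDiff_iff_contDiffAt.mpr fun x => (gfun_analyticAt x).contDiffAt
  have hdcont : Continuous (deriv gfun) := hgcd.continuous_deriv le_top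
  have hev : ∀ᶠ x in nhds (0:ℝ), 0 < deriv gfun x := by
    have ht : Filter.Tendsto (deriv gfun) (nhds 0) (nhds ((3:ℝ)⁻¹)) := by
      have h1 : Filter.Tendsto (deriv gfun) (nhds 0) (nhds (deriv gfun 0)) :=
        hdcont.continuousAt (x := (0:ℝ))
      rwa [gfun_deriv_zero.deriv] at h1
    exact ht.eventually_const_lt (by norm_num)
  obtain ⟨δ, hδ, hball⟩ := Metric.eventually_nhds_iff.mp hev
  have hderivpos : ∀ x ∈ Set.Ioi (-δ), 0 < deriv gfun x := by
    intro x hx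
    rcases lt_or_ge 0 x with h | h
    · obtain ⟨d, hd, hgd⟩ := gfun_deriv_pos x h
      rwa [hgd.deriv]
    · apply hball
      rw [Real.dist_eq, sub_zero, abs_of_nonpos h]
      simp only [Set.mem_Ioi] at hx
      linarith
  have hmono : StrictMonoOn gfun (Set.Ioi (-δ)) := by
    apply strictMonoOn_of_deriv_pos (convex_Ioi _) hgcd.continuous.continuousOn
    intro x hx
    exact hderivpos x (by rwa [interior_Ioi] at hx)
  -- pointwise argument
  intro r₀ hr₀
  have hr₀' : (0:ℝ) ≤ r₀ := hr₀
  have hbase : 0 ≤ ztilde r₀ ∧ gfun (ztilde r₀) = 2 + r₀ := by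
    rcases eq_or_lt_of_le hr₀' with h | h
    · rw [← h, h0, gfun_zero]
      norm_num
    · obtain ⟨hpos, heq⟩ := hz r₀ h
      rw [gfun_eq _ hpos.ne'] at heq
      exact ⟨hpos.le, heq⟩
  obtain ⟨hz₀nn, hgz₀⟩ := hbase
  set z₀ := ztilde r₀ with hz₀def
  have hder : ∃ d, 0 < d ∧ HasDerivAt gfun d z₀ := by
    rcases eq_or_lt_of_le hz₀nn with h | h
    · exact ⟨(3:ℝ)⁻¹, by norm_num, by rw [← h]; exact gfun_deriv_zero⟩
    · exact gfun_deriv_pos z₀ h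
  obtain ⟨d, hd, hgd⟩ := hder
  set f' : ℝ ≃L[ℝ] ℝ := ContinuousLinearEquiv.unitsEquivAut ℝ (Units.mk0 d hd.ne') with hf'def
  have hfd : HasFDerivAt gfun (f' : ℝ →L[ℝ] ℝ) z₀ := by
    have h1 := hgd.hasFDerivAt
    have h2 : (f' : ℝ →L[ℝ] ℝ) = ContinuousLinearMap.smulRight (1 : ℝ →L[ℝ] ℝ) d := rfl
    rwa [h2]
  have hcdAt : ContDiffAt ℝ (⊤ : WithTop ℕ∞) gfun z₀ := (gfun_analyticAt z₀).contDiffAt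
  have hS : HasStrictFDerivAt gfun (f' : ℝ →L[ℝ] ℝ) z₀ := hcdAt.hasStrictFDerivAt' hfd (by simp)
  set φ : ℝ → ℝ := hS.localInverse gfun f' z₀ with hφdef
  have hφcd : ContDiffAt ℝ (⊤ : WithTop ℕ∞) φ (gfun z₀) := hcdAt.to_localInverse hfd (by simp)
  have hleft : φ (gfun z₀) = z₀ := hS.localInverse_apply_image
  have hright : ∀ᶠ y in nhds (gfun z₀), gfun (φ y) = y := hS.eventually_right_inverse
  have hφcont : ContinuousAt φ (gfun z₀) := hS.localInverse_continuousAt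
  -- the smooth candidate
  have hFcd : ContDiffAt ℝ (⊤ : WithTop ℕ∞) (fun r : ℝ => φ (2 + r)) r₀ := by
    have h1 : ContDiffAt ℝ (⊤ : WithTop ℕ∞) (fun r : ℝ => 2 + r) r₀ :=
      contDiffAt_const.add contDiffAt_id
    have h2 : ContDiffAt ℝ (⊤ : WithTop ℕ∞) φ ((fun r : ℝ => 2 + r) r₀) := by
      simpa [← hgz₀] using hφcd
    exact h2.comp r₀ h1
  -- eventual equality near `r₀` within `Ici 0`
  have htend2 : Filter.Tendsto (fun r : ℝ => 2 + r) (nhds r₀) (nhds (gfun z₀)) := by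
    rw [hgz₀]
    exact (continuous_const.add continuous_id).continuousAt
  have hev1 : ∀ᶠ r in nhds r₀, gfun (φ (2 + r)) = 2 + r := htend2.eventually hright
  have hev2 : ∀ᶠ r in nhds r₀, -δ < φ (2 + r) := by
    have ht : Filter.Tendsto (fun r : ℝ => φ (2 + r)) (nhds r₀) (nhds z₀) := by
      have := hφcont.tendsto.comp htend2
      rwa [hleft] at this
    exact ht.eventually_const_lt (by linarith)
  have hevE : ztilde =ᶠ[nhdsWithin r₀ (Set.Ici 0)] fun r : ℝ => φ (2 + r) := by
    have hcomb := (hev1.and hev2).filter_mono (nhdsWithin_le_nhds (s := Set.Ici 0))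
    filter_upwards [hcomb, self_mem_nhdsWithin] with r hr hrIci
    obtain ⟨h1, h2⟩ := hr
    have hr0 : (0:ℝ) ≤ r := hrIci
    rcases eq_or_lt_of_le hr0 with h | h
    · -- r = 0 : both `φ (2+r)` and `0` are solutions of `gfun · = 2`
      have h' : r = 0 := h.symm
      subst h'
      have hg2 : gfun (φ (2 + 0)) = gfun 0 := by
        rw [h1, gfun_zero]
        norm_num
      have hinj := hmono.injOn (Set.mem_Ioi.mpr h2) (Set.mem_Ioi.mpr (by linarith)) hg2
      rw [h0]
      exact hinj.symm
    · obtain ⟨hpos, heq⟩ := hz r h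
      rw [gfun_eq _ hpos.ne'] at heq
      have hg2 : gfun (ztilde r) = gfun (φ (2 + r)) := by rw [heq, h1]
      exact hmono.injOn (Set.mem_Ioi.mpr (by linarith)) (Set.mem_Ioi.mpr h2) hg2
  have hvle : ztilde r₀ = φ (2 + r₀) := by
    rw [← hgz₀, hleft]
  exact ((hFcd.contDiffWithinAt).congr_of_eventuallyEq hevE hvle).of_le le_top
end

section
/- Define z(β) = e·β + log β and 𝒳(β) = e^{−1}·z(β)² − z(β)·β·(1 − exp(−z(β))) for β > 0. Then 𝒳(e^{−1}) = 0, the first, second and third derivatives of 𝒳 at β = e^{−1} all vanish, and the fourth derivative of 𝒳 at β = e^{−1} equals 8e³. -/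
/-!
For `β > 0` one has `β e^{-z(β)} = e^{-eβ}`, so `𝒳 = z · w` with
`w(β) = e⁻¹ log β + e^{-eβ}` (`leafCofactor`). At `β = e⁻¹` the factor `z` vanishes with
`z' = 2e`, while `w^{(n+1)}(e⁻¹) = (-e)ⁿ (n! - 1)`, so `w` vanishes to third order there
with `w''' = e²`. By Leibniz's rule the derivatives of `z · w` of order at most three vanish
at `e⁻¹`, and the fourth one is `4 z' w''' = 8e³`.
-/

open Real Filter Set Topology

theorem Real.iteratedDeriv_succ_log (n : ℕ) (x : ℝ) :
    iteratedDeriv (n + 1) log x = (-1) ^ n * n.factorial * x ^ (-1 - n : ℤ) := by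
  rw [iteratedDeriv_succ', deriv_log', iteratedDeriv_eq_iterate, iter_deriv_inv]

section VanishingProduct

variable {𝕜 𝔸 : Type*} [NontriviallyNormedField 𝕜] [NormedRing 𝔸] [NormedAlgebra 𝕜 𝔸]
  {f g : 𝕜 → 𝔸} {a : 𝕜} {m : ℕ}

theorem iteratedDeriv_mul_eq_zero_of_vanishing {n : ℕ} (hn : n ≤ m)
    (hf : ContDiffAt 𝕜 n f a) (hg : ContDiffAt 𝕜 n g a)
    (hfa : f a = 0) (hga : ∀ k < m, iteratedDeriv k g a = 0) :
    iteratedDeriv n (f * g) a = 0 := by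
  rw [iteratedDeriv_mul hf hg]
  refine Finset.sum_eq_zero fun i hi => ?_
  rcases i with _ | i
  · simp [hfa]
  · rw [hga _ (by simp at hi; omega), mul_zero]

theorem iteratedDeriv_succ_mul_of_vanishing
    (hf : ContDiffAt 𝕜 (m + 1) f a) (hg : ContDiffAt 𝕜 (m + 1) g a)
    (hfa : f a = 0) (hga : ∀ k < m, iteratedDeriv k g a = 0) :
    iteratedDeriv (m + 1) (f * g) a = (m + 1) * deriv f a * iteratedDeriv m g a := by
  rw [iteratedDeriv_mul hf hg, Finset.sum_eq_single 1]
  · simp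
  · rintro (_ | _ | i) hi hi₁
    · simp [hfa]
    · exact absurd rfl hi₁
    · rw [hga _ (by simp at hi ⊢; omega), mul_zero]
  · simp

end VanishingProduct

theorem hasDerivAt_const_mul_add_log (c : ℝ) {x : ℝ} (hx : x ≠ 0) :
    HasDerivAt (fun y => c * y + log y) (c * 1 + x⁻¹) x :=
  ((hasDerivAt_id' x).const_mul c).add (hasDerivAt_log hx)

noncomputable def leafCofactor (β : ℝ) : ℝ := (exp 1)⁻¹ * log β + exp (-exp 1 * β)

theorem fluidLeaves_eq_mul_leafCofactor {β : ℝ} (hβ : 0 < β) :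
    (exp 1)⁻¹ * (exp 1 * β + log β) ^ 2
        - (exp 1 * β + log β) * β * (1 - exp (-(exp 1 * β + log β)))
      = (exp 1 * β + log β) * leafCofactor β := by
  have hexp : β * exp (-(exp 1 * β + log β)) = exp (-exp 1 * β) := by
    rw [neg_add, exp_add, exp_neg (log β), exp_log hβ, neg_mul]
    field_simp
  rw [leafCofactor, ← hexp]
  field_simp
  ring

theorem contDiffAt_leafCofactor {n : WithTop ℕ∞} {β : ℝ} (hβ : β ≠ 0) :
    ContDiffAt ℝ n leafCofactor β :=
  (contDiffAt_const.mul (contDiffAt_log.2 hβ)).add (by fun_prop)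

theorem leafCofactor_inv_exp : leafCofactor (exp 1)⁻¹ = 0 := by
  rw [leafCofactor, log_inv, log_exp, neg_mul, mul_inv_cancel₀ (exp_ne_zero 1)]
  simp [exp_neg]

theorem iteratedDeriv_succ_leafCofactor_inv_exp (n : ℕ) :
    iteratedDeriv (n + 1) leafCofactor (exp 1)⁻¹ = (-exp 1) ^ n * (n.factorial - 1) := by
  have hne : (exp 1)⁻¹ ≠ 0 := inv_ne_zero (exp_ne_zero 1)
  have hlog : iteratedDeriv (n + 1) (fun β => (exp 1)⁻¹ * log β) (exp 1)⁻¹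
      = (-exp 1) ^ n * n.factorial := by
    rw [iteratedDeriv_const_mul_field, Real.iteratedDeriv_succ_log, inv_zpow', neg_sub,
      sub_neg_eq_add, show (n : ℤ) + 1 = ((n + 1 : ℕ) : ℤ) by push_cast; ring, zpow_natCast]
    field_simp
    ring
  have hexp :
      iteratedDeriv (n + 1) (fun β => exp (-exp 1 * β)) (exp 1)⁻¹ = -(-exp 1) ^ n := by
    simp only [iteratedDeriv_exp_const_mul]
    rw [neg_mul, mul_inv_cancel₀ (exp_ne_zero 1), pow_succ]
    simp [exp_neg]
  have hlog_smooth : ContDiffAt ℝ (n + 1) (fun β => (exp 1)⁻¹ * log β) (exp 1)⁻¹ :=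
    contDiffAt_const.mul (contDiffAt_log.2 hne)
  have hexp_smooth : ContDiffAt ℝ (n + 1) (fun β => exp (-exp 1 * β)) (exp 1)⁻¹ := by
    fun_prop
  rw [show leafCofactor = (fun β => (exp 1)⁻¹ * log β) + fun β => exp (-exp 1 * β) from rfl,
    iteratedDeriv_add hlog_smooth hexp_smooth, hlog, hexp]
  ring

theorem iteratedDeriv_leafCofactor_inv_exp_of_lt_three :
    ∀ k < 3, iteratedDeriv k leafCofactor (exp 1)⁻¹ = 0
  | 0, _ => leafCofactor_inv_exp
  | 1, _ => by simpa using iteratedDeriv_succ_leafCofactor_inv_exp 0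
  | 2, _ => by simpa using iteratedDeriv_succ_leafCofactor_inv_exp 1

/-- With `z β = e β + log β` and
`𝒳 β = e⁻¹ z(β)² - z(β) β (1 - exp (-z β))`, one has `𝒳 e⁻¹ = 0`, the first three
derivatives of `𝒳` vanish at `β = e⁻¹`, and the fourth derivative there is `8 e³`. -/
theorem karpSipser_fluid_leaves_derivatives (z 𝒳 : ℝ → ℝ)
    (hz : ∀ β : ℝ, z β = Real.exp 1 * β + Real.log β)
    (hX : ∀ β : ℝ, 𝒳 β = (Real.exp 1)⁻¹ * (z β) ^ 2 - z β * β * (1 - Real.exp (-(z β)))) :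
    𝒳 (Real.exp 1)⁻¹ = 0 ∧
    deriv 𝒳 (Real.exp 1)⁻¹ = 0 ∧
    iteratedDeriv 2 𝒳 (Real.exp 1)⁻¹ = 0 ∧
    iteratedDeriv 3 𝒳 (Real.exp 1)⁻¹ = 0 ∧
    iteratedDeriv 4 𝒳 (Real.exp 1)⁻¹ = 8 * (Real.exp 1) ^ 3 := by
  obtain rfl : z = fun β => exp 1 * β + log β := funext hz
  set a := (exp 1)⁻¹
  have ha : a ≠ 0 := inv_ne_zero (exp_ne_zero 1)
  have hXzw : 𝒳 =ᶠ[𝓝 a] (fun β => exp 1 * β + log β) * leafCofactor := by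
    filter_upwards [Ioi_mem_nhds (by positivity : 0 < a)] with β hβ
    rw [hX, Pi.mul_apply, fluidLeaves_eq_mul_leafCofactor hβ]
  have hz_smooth {n : ℕ} : ContDiffAt ℝ n (fun β => exp 1 * β + log β) a :=
    (contDiffAt_const.mul contDiffAt_id).add (contDiffAt_log.2 ha)
  have hza : exp 1 * a + log a = 0 := by
    rw [log_inv, log_exp, mul_inv_cancel₀ (exp_ne_zero 1), add_neg_cancel]
  have hvanish {n : ℕ} (hn : n ≤ 3) : iteratedDeriv n 𝒳 a = 0 := by
    rw [hXzw.iteratedDeriv_eq]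
    exact iteratedDeriv_mul_eq_zero_of_vanishing hn hz_smooth (contDiffAt_leafCofactor ha) hza
      iteratedDeriv_leafCofactor_inv_exp_of_lt_three
  refine ⟨by simpa using hvanish (n := 0) (by norm_num),
    by simpa using hvanish (n := 1) (by norm_num), hvanish (by norm_num), hvanish le_rfl, ?_⟩
  rw [hXzw.iteratedDeriv_eq, iteratedDeriv_succ_mul_of_vanishing hz_smooth
    (contDiffAt_leafCofactor ha) hza iteratedDeriv_leafCofactor_inv_exp_of_lt_three,
    (hasDerivAt_const_mul_add_log _ ha).deriv, iteratedDeriv_succ_leafCofactor_inv_exp 2, inv_inv]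
  push_cast
  ring
end

section
/- Let t(β) = 1 − β − (1/(2e))·(log β)². Then t is strictly decreasing on (e^{−1}, ∞); for every ε > 0 there is a unique β(ε) > e^{−1} with t(β(ε)) = 1 − 3/(2e) − ε; and as ε → 0+ one has the expansion β(ε) = e^{−1} + e^{−1/2}·ε^{1/2} + (5/12)·ε + O(ε^{3/2}). -/
/-!
Write `β = e⁻¹ (1 + u)`. Then `t(e⁻¹) - t(β) = g(u) / e` with
`g(u) = u + log (1 + u)² / 2 - log (1 + u) = u² - (5/6) u³ + O(u⁴)`, so with `w = √(e ε)` the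
equation `t(β) = t(e⁻¹) - ε` reads `g(u) = w²`, whose solution is `u = w + (5/12) w² + O(w³)`.
Since `t` is strictly decreasing, it suffices to compare `g(u)` with `w²` at the two points
`u = w + (5/12) w² ± 10 w³`; after replacing `log (1 + u)` by its cubic Taylor polynomial this is a
polynomial inequality in `w`.
-/

open Real Filter Set Topology Asymptotics

lemma abs_log_one_add_sub_le {u : ℝ} (hu : |u| ≤ 1 / 2) :
    |log (1 + u) - (u - u ^ 2 / 2 + u ^ 3 / 3)| ≤ 2 * u ^ 4 := by
  have h := abs_log_sub_add_sum_range_le (x := -u) (by rw [abs_neg]; linarith) 3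
  norm_num [Finset.sum_range_succ] at h
  have h4 : |u| ^ 4 / (1 - |u|) ≤ 2 * u ^ 4 := by
    rw [div_le_iff₀ (by linarith), pow_abs, abs_of_nonneg (by positivity)]
    nlinarith [mul_nonneg (pow_nonneg (sq_nonneg u) 2) (by linarith : 0 ≤ 1 - 2 * |u|)]
  calc |log (1 + u) - (u - u ^ 2 / 2 + u ^ 3 / 3)|
      = |-u + u ^ 2 / 2 + (-u) ^ 3 / 3 + log (1 + u)| := by ring_nf
    _ ≤ 2 * u ^ 4 := h.trans h4

lemma pow_add_le_pow_mul {w r : ℝ} (hw : 0 ≤ w) (hwr : w ≤ r) (m k : ℕ) :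
    w ^ (m + k) ≤ r ^ k * w ^ m := by
  rw [pow_add, mul_comm]
  exact mul_le_mul_of_nonneg_right (pow_le_pow_left₀ hw hwr k) (pow_nonneg hw m)

-- In both lemmas the difference of the two sides is `w⁴ (c + O(w))` with `c = 1315/144`,
-- resp. `1565/144`; the `O(w)` part is controlled through `w ^ (4 + k) ≤ 100⁻ᵏ w ^ 4`.
lemma sq_le_of_eq_add_cube {w u : ℝ} (hw0 : 0 ≤ w) (hw : w ≤ 1 / 100)
    (hu : u = w + 5 / 12 * w ^ 2 + 10 * w ^ 3) :
    w ^ 2 ≤ u ^ 2 - 5 / 6 * u ^ 3 - 10 * u ^ 4 := by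
  have h := pow_add_le_pow_mul hw0 hw 4
  subst hu
  nlinarith [h 1, h 2, h 3, h 4, h 5, h 6, h 7, h 8, pow_nonneg hw0 4]

lemma le_sq_of_eq_sub_cube {w u : ℝ} (hw0 : 0 ≤ w) (hw : w ≤ 1 / 100)
    (hu : u = w + 5 / 12 * w ^ 2 - 10 * w ^ 3) :
    u ^ 2 - 5 / 6 * u ^ 3 + 10 * u ^ 4 ≤ w ^ 2 := by
  have h := pow_add_le_pow_mul hw0 hw 4
  subst hu
  nlinarith [h 1, h 2, h 3, h 4, h 5, h 6, h 7, h 8, pow_nonneg hw0 4]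

noncomputable def karpSipserTime (β : ℝ) : ℝ := 1 - β - 1 / (2 * exp 1) * log β ^ 2

lemma karpSipserTime_inv_exp : karpSipserTime (exp 1)⁻¹ = 1 - 3 / (2 * exp 1) := by
  rw [karpSipserTime, log_inv, log_exp]
  field_simp
  ring

lemma continuousOn_karpSipserTime : ContinuousOn karpSipserTime (Ioi 0) :=
  (continuousOn_const.sub continuousOn_id).sub
    (continuousOn_const.mul ((continuousOn_log.mono fun _ hx => ne_of_gt hx).pow 2))

lemma karpSipserTime_strictAntiOn : StrictAntiOn karpSipserTime (Ioi (exp 1)⁻¹) := by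
  intro a ha b _ hab
  have he : 0 < exp 1 := exp_pos 1
  have ha0 : 0 < a := (inv_pos.2 he).trans ha
  have hea : 1 < exp 1 * a := by rwa [← inv_mul_lt_iff₀ he, mul_one]
  have hloga : -1 < log a := by simpa using log_lt_log (inv_pos.2 he) ha
  have hlog : log a < log b := log_lt_log ha0 hab
  -- `log b - log a < e (b - a)` and `log a + log b > -2` make the `log²` term lose to `b - a`.
  have hdiff : log b - log a < exp 1 * (b - a) := by
    have := log_le_sub_one_of_pos (div_pos (ha0.trans hab) ha0)
    rw [log_div (ha0.trans hab).ne' ha0.ne'] at this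
    calc log b - log a ≤ b / a - 1 := this
      _ = (b - a) / a := by field_simp
      _ < exp 1 * (b - a) := by
        rw [div_lt_iff₀ ha0]; nlinarith
  have key : karpSipserTime a - karpSipserTime b
      = (2 * exp 1 * (b - a) + (log b - log a) * (log b + log a)) / (2 * exp 1) := by
    unfold karpSipserTime; field_simp; ring
  rw [← sub_pos, key]
  have hsum : 0 < log b + log a + 2 := by linarith
  have : 0 < 2 * exp 1 * (b - a) + (log b - log a) * (log b + log a) := by
    nlinarith [mul_pos (sub_pos.2 hlog) hsum]
  positivity

lemma existsUnique_karpSipserTime_eq {ε : ℝ} (hε : 0 < ε) :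
    ∃! β, (exp 1)⁻¹ < β ∧ karpSipserTime β = 1 - 3 / (2 * exp 1) - ε := by
  have he : 0 < exp 1 := exp_pos 1
  have hM : (exp 1)⁻¹ ≤ 3 / (2 * exp 1) + ε := by
    rw [inv_eq_one_div, div_le_iff₀ he]; field_simp; nlinarith
  have hcont : ContinuousOn karpSipserTime (Icc (exp 1)⁻¹ (3 / (2 * exp 1) + ε)) :=
    continuousOn_karpSipserTime.mono fun x hx => (inv_pos.2 he).trans_le hx.1
  have hmem : 1 - 3 / (2 * exp 1) - ε ∈
      Ico (karpSipserTime (3 / (2 * exp 1) + ε)) (karpSipserTime (exp 1)⁻¹) := by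
    rw [karpSipserTime_inv_exp, karpSipserTime]
    constructor
    · have : 0 ≤ 1 / (2 * exp 1) * log (3 / (2 * exp 1) + ε) ^ 2 := by positivity
      linarith
    · linarith
  obtain ⟨β, hβ, hβt⟩ := intermediate_value_Ioc' hM hcont hmem
  exact ⟨β, ⟨hβ.1, hβt⟩, fun γ hγ =>
    karpSipserTime_strictAntiOn.injOn hγ.1 hβ.1 (hγ.2.trans hβt.symm)⟩

noncomputable def extinctionGap (u : ℝ) : ℝ := u + log (1 + u) ^ 2 / 2 - log (1 + u)

lemma karpSipserTime_inv_exp_mul {u : ℝ} (hu : -1 < u) :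
    karpSipserTime ((exp 1)⁻¹ * (1 + u)) = 1 - 3 / (2 * exp 1) - extinctionGap u / exp 1 := by
  rw [karpSipserTime, extinctionGap, log_mul (by positivity) (by linarith), log_inv, log_exp]
  field_simp
  ring

lemma abs_extinctionGap_sub_le {u : ℝ} (hu0 : 0 ≤ u) (hu : u ≤ 1 / 2) :
    |extinctionGap u - (u ^ 2 - 5 / 6 * u ^ 3)| ≤ 10 * u ^ 4 := by
  have hp : 0 ≤ u - u ^ 2 / 2 + u ^ 3 / 3 ∧ u - u ^ 2 / 2 + u ^ 3 / 3 ≤ 1 := by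
    constructor <;> nlinarith [pow_nonneg hu0 3]
  set L := log (1 + u)
  set p := u - u ^ 2 / 2 + u ^ 3 / 3
  have hr : |L - p| ≤ 2 * u ^ 4 := abs_log_one_add_sub_le (by rw [abs_of_nonneg hu0]; linarith)
  have key : extinctionGap u - (u ^ 2 - 5 / 6 * u ^ 3)
      = (11 / 24 * u ^ 4 - u ^ 5 / 6 + u ^ 6 / 18) + (L - p) * (p - 1 + (L - p) / 2) := by
    unfold extinctionGap; ring
  have hpoly : |11 / 24 * u ^ 4 - u ^ 5 / 6 + u ^ 6 / 18| ≤ u ^ 4 := by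
    rw [abs_le]; constructor <;> nlinarith [pow_nonneg hu0 4, pow_nonneg hu0 5, pow_nonneg hu0 6]
  have hfactor : |p - 1 + (L - p) / 2| ≤ 2 := by
    have := abs_le.1 hr
    rw [abs_le]; constructor <;> nlinarith [pow_le_one₀ hu0 (by linarith : u ≤ 1) (n := 4)]
  calc |extinctionGap u - (u ^ 2 - 5 / 6 * u ^ 3)|
      ≤ |11 / 24 * u ^ 4 - u ^ 5 / 6 + u ^ 6 / 18| + |L - p| * |p - 1 + (L - p) / 2| := by
        rw [key, ← abs_mul]; exact abs_add_le _ _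
    _ ≤ u ^ 4 + 2 * u ^ 4 * 2 := by gcongr
    _ ≤ 10 * u ^ 4 := by nlinarith [pow_nonneg hu0 4]

lemma abs_exp_mul_sub_one_sub_le {w β : ℝ} (hw0 : 0 < w) (hw : w ≤ 1 / 100)
    (hβ : (exp 1)⁻¹ < β) (htβ : karpSipserTime β = 1 - 3 / (2 * exp 1) - w ^ 2 / exp 1) :
    |exp 1 * β - 1 - (w + 5 / 12 * w ^ 2)| ≤ 10 * w ^ 3 := by
  have he : 0 < exp 1 := exp_pos 1
  set uUp := w + 5 / 12 * w ^ 2 + 10 * w ^ 3 with huUp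
  set uLo := w + 5 / 12 * w ^ 2 - 10 * w ^ 3 with huLo
  have huLo0 : 0 < uLo := by nlinarith [pow_pos hw0 2, pow_pos hw0 3]
  have huUp1 : uUp ≤ 1 / 2 := by nlinarith [pow_pos hw0 2, pow_pos hw0 3]
  have hLoUp : uLo ≤ uUp := by nlinarith [pow_pos hw0 3]
  have hmem : ∀ u, 0 < u → (exp 1)⁻¹ * (1 + u) ∈ Ioi (exp 1)⁻¹ := fun u hu => by
    simp only [mem_Ioi]; nlinarith [inv_pos.2 he]
  have hUp : β ≤ (exp 1)⁻¹ * (1 + uUp) := by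
    refine (karpSipserTime_strictAntiOn.le_iff_ge (hmem uUp (by linarith)) hβ).1 ?_
    rw [karpSipserTime_inv_exp_mul (by linarith), htβ]
    have := (abs_le.1 (abs_extinctionGap_sub_le (by linarith) huUp1)).1
    have := sq_le_of_eq_add_cube hw0.le hw huUp
    gcongr
    linarith
  have hLo : (exp 1)⁻¹ * (1 + uLo) ≤ β := by
    refine (karpSipserTime_strictAntiOn.le_iff_ge hβ (hmem uLo huLo0)).1 ?_
    rw [karpSipserTime_inv_exp_mul (by linarith), htβ]
    have := (abs_le.1 (abs_extinctionGap_sub_le huLo0.le (by linarith))).2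
    have := le_sq_of_eq_sub_cube hw0.le hw huLo
    gcongr
    linarith
  rw [le_inv_mul_iff₀ he] at hUp
  rw [inv_mul_le_iff₀ he] at hLo
  rw [abs_le]
  constructor <;> linarith

lemma isBigO_sub_expansion_of_karpSipserTime_eq {B : ℝ → ℝ}
    (hB : ∀ ε : ℝ, 0 < ε →
      (exp 1)⁻¹ < B ε ∧ karpSipserTime (B ε) = 1 - 3 / (2 * exp 1) - ε) :
    (fun ε : ℝ => B ε - ((exp 1)⁻¹ + exp (-(1 / 2)) * √ε + 5 / 12 * ε))
      =O[𝓝[>] 0] (fun ε : ℝ => ε * √ε) := by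
  have he : 0 < exp 1 := exp_pos 1
  have hq : √(exp 1) ^ 2 = exp 1 := sq_sqrt he.le
  have hexp : exp (-(1 / 2)) = (√(exp 1))⁻¹ := by rw [exp_neg, ← exp_half]
  refine isBigO_iff.2 ⟨10 * √(exp 1), ?_⟩
  filter_upwards [Ioo_mem_nhdsGT (show (0 : ℝ) < 1 / (100 ^ 2 * exp 1) by positivity)]
    with ε ⟨hε0, hε1⟩
  obtain ⟨hβ, htβ⟩ := hB ε hε0
  set w := √(exp 1) * √ε with hw
  have hw0 : 0 < w := by positivity
  have hw2 : w ^ 2 = exp 1 * ε := by rw [mul_pow, hq, sq_sqrt hε0.le]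
  have hw1 : w ≤ 1 / 100 := by
    rw [lt_div_iff₀ (by positivity)] at hε1
    nlinarith
  have hbound := abs_exp_mul_sub_one_sub_le hw0 hw1 hβ (by rw [htβ, hw2]; field_simp)
  rw [norm_of_nonneg (by positivity : 0 ≤ ε * √ε), Real.norm_eq_abs]
  calc |B ε - ((exp 1)⁻¹ + exp (-(1 / 2)) * √ε + 5 / 12 * ε)|
      = |(exp 1 * B ε - 1 - (w + 5 / 12 * w ^ 2)) / exp 1| := by
        rw [hw2, hexp]
        congr 1
        field_simp
        linear_combination 12 * √ε * hq + 12 * √(exp 1) * hw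
    _ = |exp 1 * B ε - 1 - (w + 5 / 12 * w ^ 2)| / exp 1 := by rw [abs_div, abs_of_pos he]
    _ ≤ 10 * w ^ 3 / exp 1 := by gcongr
    _ = 10 * √(exp 1) * (ε * √ε) := by
        rw [div_eq_iff he.ne']
        linear_combination 10 * w * hw2 + 10 * exp 1 * ε * hw

/-- For `t β = 1 - β - (1/(2e)) (log β)²`: `t` is strictly decreasing
on `(e⁻¹, ∞)`; for every `ε > 0` there is a unique `β > e⁻¹` with
`t β = 1 - 3/(2e) - ε`; and any such solution function `B` satisfies
`B ε = e⁻¹ + e^{-1/2} √ε + (5/12) ε + O(ε^{3/2})` as `ε → 0⁺`. -/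
theorem karpSipser_beta_expansion (t : ℝ → ℝ)
    (ht : ∀ β : ℝ, t β = 1 - β - 1 / (2 * Real.exp 1) * (Real.log β) ^ 2) :
    StrictAntiOn t (Set.Ioi (Real.exp 1)⁻¹) ∧
    (∀ ε : ℝ, 0 < ε →
      ∃! β : ℝ, (Real.exp 1)⁻¹ < β ∧ t β = 1 - 3 / (2 * Real.exp 1) - ε) ∧
    (∀ B : ℝ → ℝ,
      (∀ ε : ℝ, 0 < ε →
        (Real.exp 1)⁻¹ < B ε ∧ t (B ε) = 1 - 3 / (2 * Real.exp 1) - ε) →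
      (fun ε : ℝ =>
          B ε - ((Real.exp 1)⁻¹ + Real.exp (-(1 / 2)) * Real.sqrt ε + 5 / 12 * ε))
        =O[𝓝[>] (0 : ℝ)] (fun ε : ℝ => ε * Real.sqrt ε)) := by
  obtain rfl : t = karpSipserTime := funext ht
  exact ⟨karpSipserTime_strictAntiOn, fun _ => existsUnique_karpSipserTime_eq,
    fun _ => isBigO_sub_expansion_of_karpSipserTime_eq⟩
end

section
/- For ε > 0, let β(ε) denote the unique β > e^{−1} with 1 − β − (1/(2e))·(log β)² = 1 − 3/(2e) − ε, and set z(β) = e·β + log β. Then z(β(ε)) ∼ 2·e^{1/2}·ε^{1/2} as ε → 0+, i.e. z(β(ε))/(2·e^{1/2}·ε^{1/2}) → 1. -/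
/-!
With `a = e⁻¹`, `z β = e β + log β` and `gap β = β + (log β)² / (2e) - 3/(2e)`, the defining
equation of `β(ε)` reads `gap (β(ε)) = ε`. Both `z` and `gap` vanish at `a`, and
`gap' = z / (e β)`, so `gap` is increasing on `[a, ∞)` and `β(ε) → a⁺`. By l'Hôpital,
`z² / gap` has the limit of `2 z z' / gap' = 2 e β z'`, namely `4e`, as `β → a⁺`; taking square
roots gives `z (β(ε)) / √ε → 2 e^{1/2}`.
-/

open Real Filter Set Topology

/-- If `F' = z k` then `(z²)' / F' = 2 z' / k`, so l'Hôpital's rule for `z² / F` needs only the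
limit of `2 z' / k`. -/
theorem tendsto_sq_div_of_hasDerivAt_eq_mul {z z' F k : ℝ → ℝ} {a b : ℝ} {l : Filter ℝ}
    (hab : a < b) (hz : ∀ x ∈ Ioo a b, HasDerivAt z (z' x) x)
    (hF : ∀ x ∈ Ioo a b, HasDerivAt F (z x * k x) x)
    (hz0 : ∀ x ∈ Ioo a b, z x ≠ 0) (hk0 : ∀ x ∈ Ioo a b, k x ≠ 0)
    (hza : Tendsto z (𝓝[>] a) (𝓝 0)) (hFa : Tendsto F (𝓝[>] a) (𝓝 0))
    (hlim : Tendsto (fun x => 2 * z' x / k x) (𝓝[>] a) l) :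
    Tendsto (fun x => z x ^ 2 / F x) (𝓝[>] a) l := by
  refine HasDerivAt.lhopital_zero_right_on_Ioo hab (fun x hx => (hz x hx).pow 2) hF
    (fun x hx => mul_ne_zero (hz0 x hx) (hk0 x hx)) (by simpa using hza.pow 2) hFa
    (hlim.congr' ?_)
  filter_upwards [Ioo_mem_nhdsGT hab] with x hx
  field_simp [hz0 x hx, hk0 x hx]
  ring

theorem tendsto_nhdsGT_of_strictMonoOn_comp {ι : Type*} {l : Filter ι} {f : ℝ → ℝ} {g : ι → ℝ}
    {a : ℝ} (hf : StrictMonoOn f (Ici a)) (hg : ∀ᶠ i in l, a < g i)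
    (hfg : Tendsto (f ∘ g) l (𝓝 (f a))) : Tendsto g l (𝓝[>] a) := by
  refine tendsto_nhdsWithin_iff.mpr ⟨tendsto_order.mpr ⟨fun b hb => ?_, fun b hb => ?_⟩, hg⟩
  · filter_upwards [hg] with i hi using hb.trans hi
  · have hfb : f a < f b := hf self_mem_Ici hb.le hb
    filter_upwards [(tendsto_order.mp hfg).2 _ hfb, hg] with i hi hgi
    exact (hf.lt_iff_lt hgi.le hb.le).mp hi

namespace KarpSipser

noncomputable def z (β : ℝ) : ℝ := exp 1 * β + log β

noncomputable def gap (β : ℝ) : ℝ := β + log β ^ 2 / (2 * exp 1) - 3 / (2 * exp 1)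

theorem z_inv_exp : z (exp 1)⁻¹ = 0 := by
  simp [z, log_inv]

theorem gap_inv_exp : gap (exp 1)⁻¹ = 0 := by
  simp only [gap, log_inv, log_exp]
  field_simp
  ring

theorem z_pos {β : ℝ} (hβ : (exp 1)⁻¹ < β) : 0 < z β := by
  have he : 1 < exp 1 * β := by
    simpa [exp_ne_zero] using mul_lt_mul_of_pos_left hβ (exp_pos 1)
  have hlog : -1 < log β := by
    simpa [log_inv] using log_lt_log (by positivity) hβ
  rw [z]
  linarith

theorem hasDerivAt_z {β : ℝ} (hβ : β ≠ 0) : HasDerivAt z (exp 1 + β⁻¹) β :=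
  (((hasDerivAt_id β).const_mul (exp 1)).add (hasDerivAt_log hβ)).congr_deriv (by simp)

theorem hasDerivAt_gap {β : ℝ} (hβ : β ≠ 0) : HasDerivAt gap (z β * (exp 1 * β)⁻¹) β := by
  refine (((hasDerivAt_id β).add (((hasDerivAt_log hβ).pow 2).div_const (2 * exp 1))).sub_const
    (3 / (2 * exp 1))).congr_deriv ?_
  rw [z]
  field_simp
  ring

theorem strictMonoOn_gap : StrictMonoOn gap (Ici (exp 1)⁻¹) := by
  have hpos : ∀ β ∈ Ici (exp 1)⁻¹, 0 < β := fun β hβ => lt_of_lt_of_le (by positivity) hβ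
  refine strictMonoOn_of_deriv_pos (convex_Ici _)
    (fun β hβ => (hasDerivAt_gap (hpos β hβ).ne').continuousAt.continuousWithinAt)
    (fun β hβ => ?_)
  rw [interior_Ici] at hβ
  have hβ0 : 0 < β := hpos β (mem_Ici.mpr (le_of_lt hβ))
  rw [(hasDerivAt_gap hβ0.ne').deriv]
  exact mul_pos (z_pos hβ) (by positivity)

theorem tendsto_z_sq_div_gap :
    Tendsto (fun β => z β ^ 2 / gap β) (𝓝[>] (exp 1)⁻¹) (𝓝 (4 * exp 1)) := by
  have ha : (0 : ℝ) < (exp 1)⁻¹ := by positivity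
  have hpos : ∀ β ∈ Ioi (exp 1)⁻¹, β ≠ 0 := fun β hβ => (ha.trans hβ).ne'
  have hcont : ∀ {f : ℝ → ℝ} {f'}, HasDerivAt f f' (exp 1)⁻¹ →
      Tendsto f (𝓝[>] (exp 1)⁻¹) (𝓝 (f (exp 1)⁻¹)) :=
    fun h => h.continuousAt.tendsto.mono_left nhdsWithin_le_nhds
  have hlim : Tendsto (fun β : ℝ => 2 * (exp 1 + β⁻¹) / (exp 1 * β)⁻¹) (𝓝[>] (exp 1)⁻¹)
      (𝓝 (4 * exp 1)) := by
    have hc : ContinuousAt (fun β : ℝ => 2 * (exp 1 + β⁻¹) / (exp 1 * β)⁻¹) (exp 1)⁻¹ := by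
      fun_prop (disch := simp [exp_ne_zero])
    convert hc.tendsto.mono_left nhdsWithin_le_nhds using 2
    simp [exp_ne_zero]
    ring
  refine tendsto_sq_div_of_hasDerivAt_eq_mul (b := (exp 1)⁻¹ + 1) (by linarith)
    (fun β hβ => hasDerivAt_z (hpos β hβ.1)) (fun β hβ => hasDerivAt_gap (hpos β hβ.1))
    (fun β hβ => (z_pos hβ.1).ne') (fun β hβ => by simp [exp_ne_zero, hpos β hβ.1])
    ?_ ?_ hlim
  · simpa [z_inv_exp] using hcont (hasDerivAt_z ha.ne')
  · simpa [gap_inv_exp] using hcont (hasDerivAt_gap ha.ne')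

theorem tendsto_z_div_sqrt_gap :
    Tendsto (fun β => z β / (2 * exp (1 / 2) * √(gap β))) (𝓝[>] (exp 1)⁻¹) (𝓝 1) := by
  have hsqrt : √(4 * exp 1) = 2 * exp (1 / 2) := by
    rw [show 4 * exp 1 = (2 * exp (1 / 2)) ^ 2 by rw [mul_pow, ← exp_nat_mul]; norm_num]
    exact sqrt_sq (by positivity)
  have h := (tendsto_z_sq_div_gap.sqrt.div_const (2 * exp (1 / 2)))
  rw [hsqrt, div_self (by positivity)] at h
  refine h.congr' ?_
  filter_upwards [self_mem_nhdsWithin] with β hβ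
  have hgap : 0 < gap β := by
    simpa [gap_inv_exp] using strictMonoOn_gap self_mem_Ici (mem_Ici.mpr (le_of_lt hβ)) hβ
  rw [sqrt_div' _ hgap.le, sqrt_sq (z_pos hβ).le, div_div, mul_comm]

end KarpSipser

/-- For `ε > 0` let `B ε` be the unique `β > e⁻¹` with
`1 - β - (1/(2e)) (log β)² = 1 - 3/(2e) - ε`, and set `z β = e β + log β`. Then
`z (B ε) ∼ 2 e^{1/2} ε^{1/2}` as `ε → 0⁺`. -/
theorem karpSipser_z_asymptotic_at_extinction (B : ℝ → ℝ)
    (hB : ∀ ε : ℝ, 0 < ε →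
      (Real.exp 1)⁻¹ < B ε ∧
        1 - B ε - 1 / (2 * Real.exp 1) * (Real.log (B ε)) ^ 2
          = 1 - 3 / (2 * Real.exp 1) - ε) :
    Filter.Tendsto
      (fun ε : ℝ =>
        (Real.exp 1 * B ε + Real.log (B ε)) / (2 * Real.exp (1 / 2) * Real.sqrt ε))
      (𝓝[>] (0 : ℝ)) (𝓝 1) := by
  have hgap : ∀ ε, 0 < ε → KarpSipser.gap (B ε) = ε := fun ε hε => by
    rw [KarpSipser.gap]
    linear_combination -(hB ε hε).2
  have hBa : Tendsto B (𝓝[>] 0) (𝓝[>] (exp 1)⁻¹) := by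
    refine tendsto_nhdsGT_of_strictMonoOn_comp KarpSipser.strictMonoOn_gap
      (eventually_nhdsWithin_of_forall fun ε hε => (hB ε hε).1) ?_
    rw [KarpSipser.gap_inv_exp]
    refine tendsto_nhdsWithin_of_tendsto_nhds tendsto_id |>.congr' ?_
    filter_upwards [self_mem_nhdsWithin] with ε hε using (hgap ε hε).symm
  refine (KarpSipser.tendsto_z_div_sqrt_gap.comp hBa).congr' ?_
  filter_upwards [self_mem_nhdsWithin] with ε hε
  simp only [Function.comp, hgap ε hε, KarpSipser.z]
end

section
/- Let z̃ : [0, ∞) → [0, ∞) be the function with z̃(0) = 0 and, for r > 0, z̃(r) equal to the unique z > 0 satisfying z(exp(z) − 1)/(exp(z) − z − 1) = 2 + r. Then the limit as r → 0+ of (1/r)·(−1 + z̃(r)⁴·exp(z̃(r))/((2 + r)²·(exp(z̃(r)) − z̃(r) − 1)²)) equals 0. (Equivalently: the function Φ̄_A(x̄, s̄) obtained from the drift Φ_A by the substitution x̄ = x/v, s̄ = s/v extends continuously to (0,0) with value 0 there, and its partial derivative with respect to s̄ at (0,0) vanishes.) -/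
open Real Filter Set Topology

/-! Write `z = z̃ r`, `w = eᶻ - 1` and `D = eᶻ - z - 1`. The defining equation `z w = (2 + r) D`
turns the bracket into `(z² eᶻ - w²) / w²`, and Taylor expansion of `exp` gives
`|w² - z² eᶻ| ≤ z⁴ ≤ z² w²` for `z ≤ 1`, so the bracket is `O(z²)`. On the other hand
`r D = z w - 2 D ≥ z D / 3`, so `z ≤ 3 r`, and the bracket divided by `r` is `O(r)`. -/

theorem nonneg_of_hasDerivAt_of_nonneg {f f' : ℝ → ℝ} (hf : ∀ x, HasDerivAt f (f' x) x)
    (h0 : f 0 = 0) (hf' : ∀ x, 0 ≤ x → 0 ≤ f' x) {z : ℝ} (hz : 0 ≤ z) : 0 ≤ f z := by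
  have hmono : MonotoneOn f (Ici 0) :=
    monotoneOn_of_hasDerivWithinAt_nonneg (convex_Ici 0)
      (fun x _ ↦ (hf x).continuousAt.continuousWithinAt) (fun x _ ↦ (hf x).hasDerivWithinAt)
      (fun x hx ↦ hf' x (by rw [interior_Ici] at hx; exact hx.le))
  simpa [h0] using hmono self_mem_Ici hz hz

theorem mul_exp_sub_sub_one_le {z : ℝ} (hz : 0 ≤ z) :
    z * (exp z - z - 1) ≤ 3 * ((z - 2) * exp z + z + 2) := by
  -- the difference `2 z eᶻ - 6 eᶻ + z² + 4 z + 6` vanishes to second order at `0` and is convex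
  have hderiv₂ (x : ℝ) : HasDerivAt (fun x ↦ 2 * x * exp x - 4 * exp x + 2 * x + 4)
      (2 * x * exp x - 2 * exp x + 2) x := by
    have h := (((((hasDerivAt_id' x).const_mul 2).fun_mul (hasDerivAt_exp x)).fun_sub
      ((hasDerivAt_exp x).const_mul 4)).fun_add ((hasDerivAt_id' x).const_mul 2)).add_const 4
    exact h.congr_deriv (by ring)
  have hderiv₁ (x : ℝ) : HasDerivAt (fun x ↦ 2 * x * exp x - 6 * exp x + x ^ 2 + 4 * x + 6)
      (2 * x * exp x - 4 * exp x + 2 * x + 4) x := by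
    have h := ((((((hasDerivAt_id' x).const_mul 2).fun_mul (hasDerivAt_exp x)).fun_sub
      ((hasDerivAt_exp x).const_mul 6)).fun_add (hasDerivAt_pow 2 x)).fun_add
      ((hasDerivAt_id' x).const_mul 4)).add_const 6
    exact h.congr_deriv (by ring)
  have hderiv₂_nonneg (x : ℝ) : 0 ≤ 2 * x * exp x - 2 * exp x + 2 := by
    have := mul_le_mul_of_nonneg_right (one_sub_le_exp_neg x) (exp_pos x).le
    rw [← exp_add, neg_add_cancel, exp_zero] at this
    linarith
  have := nonneg_of_hasDerivAt_of_nonneg hderiv₁ (by simp)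
    (fun x hx ↦ nonneg_of_hasDerivAt_of_nonneg hderiv₂ (by simp) (fun y _ ↦ hderiv₂_nonneg y) hx) hz
  linarith

theorem abs_exp_sub_one_sq_sub_sq_mul_exp_le {z : ℝ} (h0 : 0 ≤ z) (h1 : z ≤ 1) :
    |(exp z - 1) ^ 2 - z ^ 2 * exp z| ≤ z ^ 4 := by
  have hlower : 1 + z + z ^ 2 / 2 + z ^ 3 / 6 + z ^ 4 / 24 ≤ exp z := by
    have h := sum_le_exp_of_nonneg h0 5
    simp only [Finset.sum_range_succ, Finset.sum_range_zero, Nat.factorial] at h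
    norm_num at h
    linarith
  have hupper : exp z ≤ 1 + z + z ^ 2 / 2 + z ^ 3 / 6 + 5 * z ^ 4 / 96 := by
    have h := exp_bound' h0 h1 (n := 4) (by norm_num)
    simp only [Finset.sum_range_succ, Finset.sum_range_zero, Nat.factorial] at h
    norm_num at h
    linarith
  have hpow : ∀ n : ℕ, z ^ n ≤ 1 := fun n ↦ pow_le_one₀ h0 h1
  rw [abs_le]
  constructor <;>
  nlinarith [mul_nonneg (sub_nonneg.2 hlower) (sub_nonneg.2 hupper), mul_nonneg h0 h0,
    hpow 2, hpow 3, hpow 4]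

theorem le_three_mul_of_mul_exp_sub_one_eq {z r : ℝ} (hz : 0 < z)
    (h : z * (exp z - 1) = (2 + r) * (exp z - z - 1)) : z ≤ 3 * r := by
  have hD : 0 < exp z - z - 1 := by linarith [add_one_lt_exp hz.ne']
  refine le_of_mul_le_mul_right ?_ hD
  linear_combination mul_exp_sub_sub_one_le hz.le + 3 * h

theorem abs_rescaledDrift_le {z r : ℝ} (hz : 0 < z) (hr : r ≤ 1 / 3)
    (hroot : z * (exp z - 1) / (exp z - z - 1) = 2 + r) :
    |-1 + z ^ 4 * exp z / ((2 + r) ^ 2 * (exp z - z - 1) ^ 2)| ≤ 9 * r ^ 2 := by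
  have hD : 0 < exp z - z - 1 := by linarith [add_one_lt_exp hz.ne']
  have hroot' : z * (exp z - 1) = (2 + r) * (exp z - z - 1) := (div_eq_iff hD.ne').1 hroot
  have hzr : z ≤ 3 * r := le_three_mul_of_mul_exp_sub_one_eq hz hroot'
  have hw : z ≤ exp z - 1 := by linarith [add_one_le_exp z]
  have hw₁ : 0 < exp z - 1 := hz.trans_le hw
  have hw₀ : 0 < (exp z - 1) ^ 2 := pow_pos hw₁ 2
  have hdrift : -1 + z ^ 4 * exp z / ((2 + r) ^ 2 * (exp z - z - 1) ^ 2)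
      = -((exp z - 1) ^ 2 - z ^ 2 * exp z) / (exp z - 1) ^ 2 := by
    rw [← mul_pow, ← hroot']
    field_simp
    ring
  rw [hdrift, abs_div, abs_neg, abs_of_pos hw₀, div_le_iff₀ hw₀]
  calc |(exp z - 1) ^ 2 - z ^ 2 * exp z| ≤ z ^ 2 * z ^ 2 := by
        rw [← pow_add]; exact abs_exp_sub_one_sq_sub_sq_mul_exp_le hz.le (by linarith)
    _ ≤ 9 * r ^ 2 * (exp z - 1) ^ 2 := by
        gcongr
        nlinarith

theorem karpSipser_rescaled_drift_partial_vanishes_general (ztilde : ℝ → ℝ)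
    (hz : ∀ r : ℝ, 0 < r → 0 < ztilde r ∧
      ztilde r * (Real.exp (ztilde r) - 1) / (Real.exp (ztilde r) - ztilde r - 1) = 2 + r) :
    Filter.Tendsto
      (fun r : ℝ =>
        1 / r *
          (-1 + (ztilde r) ^ 4 * Real.exp (ztilde r) /
            ((2 + r) ^ 2 * (Real.exp (ztilde r) - ztilde r - 1) ^ 2)))
      (𝓝[>] (0 : ℝ)) (𝓝 0) := by
  refine squeeze_zero_norm' ?_
    (((continuous_const_mul 9).tendsto' 0 0 (mul_zero 9)).mono_left nhdsWithin_le_nhds)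
  filter_upwards [Ioo_mem_nhdsGT (by norm_num : (0 : ℝ) < 1 / 3)] with r ⟨hr, hr3⟩
  obtain ⟨hzr, hroot⟩ := hz r hr
  rw [norm_mul, norm_div, norm_one, norm_of_nonneg hr.le, Real.norm_eq_abs]
  calc 1 / r * |_| ≤ 1 / r * (9 * r ^ 2) := by gcongr; exact abs_rescaledDrift_le hzr hr3.le hroot
    _ = 9 * r := by field_simp

/-- Let `z̃ : [0,∞) → [0,∞)` be the function with `z̃ 0 = 0` and, for
`r > 0`, `z̃ r` the unique `z > 0` with `z (exp z - 1)/(exp z - z - 1) = 2 + r`. Then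
`(1/r) (-1 + z̃(r)⁴ exp(z̃ r) / ((2+r)² (exp(z̃ r) - z̃ r - 1)²)) → 0` as `r → 0⁺`. -/
theorem karpSipser_rescaled_drift_partial_vanishes (ztilde : ℝ → ℝ) (h0 : ztilde 0 = 0)
    (hz : ∀ r : ℝ, 0 < r → 0 < ztilde r ∧
      ztilde r * (Real.exp (ztilde r) - 1) / (Real.exp (ztilde r) - ztilde r - 1) = 2 + r) :
    Filter.Tendsto
      (fun r : ℝ =>
        1 / r *
          (-1 + (ztilde r) ^ 4 * Real.exp (ztilde r) /
            ((2 + r) ^ 2 * (Real.exp (ztilde r) - ztilde r - 1) ^ 2)))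
      (𝓝[>] (0 : ℝ)) (𝓝 0) :=
  karpSipser_rescaled_drift_partial_vanishes_general ztilde hz
end
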